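/- Termination bound: in the value iteration W_0 = G, W_{n+1} = P(W_n) over finite X with g taking values in a fixed finite set of nonnegative reals (or more simply, with g strictly positive below by c > 0 and G bounded on its finite part), the number of iterations n at which W_{n+1} ≠ W_n is finite, and if additionally each strict decrease W_{n+1}(x) < W_n(x) requires W_{n+1}(x) to equal Q(W_n, x) which is attained via at least one extra transition from the previous witnessing paths, then W_{|X|} = W_{|X|+1}. -/

import Mathlib

noncomputable def Pop {X U : Type*} (F : X → U → Set X) (G : X → EReal)
    (g : X → X → U → EReal) (W : X → EReal) (x : X) : EReal :=
  min (G x) (⨅ u : U, ⨆ y ∈ F x u, g x y u + W y)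

/-!
The iterates `Wₙ = Popⁿ G` decrease pointwise. With nonnegative costs, a strict decrease
`W_{k+2} x < W_{k+1} x` is caused by a successor `y` that decreased at the previous step and
satisfies `W_{k+1} y ≤ W_{k+2} x`. Every state `z` with `W_{k+1} z ≤ W_{k+1} y` then satisfies
`W_{k+2} z ≤ W_{k+2} x`, while `x` itself is not among them. By induction, a strict decrease at
step `k` leaves at least `k + 1` states at level at most `W_{k+1} x`, which is impossible for
`k = |X|`.
-/

open Finset

theorem Function.finite_setOf_iterate_succ_ne {α : Type*} (f : α → α) (a : α) {N : ℕ}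
    (hN : f^[N + 1] a = f^[N] a) : {n : ℕ | f^[n + 1] a ≠ f^[n] a}.Finite := by
  refine (Set.finite_Iio N).subset fun n hn => Set.mem_Iio.2 <| not_le.1 fun hNn => hn ?_
  obtain ⟨m, rfl⟩ := Nat.exists_eq_add_of_le hNn
  rw [add_right_comm, add_comm, Function.iterate_add_apply, hN, ← Function.iterate_add_apply,
    add_comm]

section Pop

variable {X U : Type*} (F : X → U → Set X) (G : X → EReal) (g : X → X → U → EReal)

theorem pop_mono : Monotone (Pop F G g) := fun _ _ hV _ =>
  min_le_min_left _ <| iInf_mono fun _ => iSup₂_mono fun y _ => add_le_add_right (hV y) _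

theorem pop_le (V : X → EReal) : Pop F G g V ≤ G := fun _ => min_le_left _ _

theorem antitone_iterate_pop : Antitone fun n => (Pop F G g)^[n] G :=
  (pop_mono F G g).antitone_iterate_of_map_le (pop_le F G g G)

variable {F G g}

theorem exists_lt_and_le_pop_of_pop_lt [Finite U] [Nonempty U]
    (hg : ∀ x y u, 0 ≤ g x y u) {V V' : X → EReal} (hV : V ≤ V') {x : X}
    (h : Pop F G g V x < Pop F G g V' x) : ∃ y, V y < V' y ∧ V y ≤ Pop F G g V x := by
  have hQ : Pop F G g V x = ⨅ u, ⨆ y ∈ F x u, g x y u + V y :=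
    min_eq_right ((min_lt_iff.1 (h.trans_le (pop_le F G g V' x))).resolve_left (lt_irrefl _)).le
  obtain ⟨u, hu⟩ := exists_eq_ciInf_of_finite (f := fun u => ⨆ y ∈ F x u, g x y u + V y)
  rw [← hu] at hQ
  by_contra! hno
  have hVeq : ∀ y ∈ F x u, V y = V' y := fun y hy => (hV y).antisymm <| not_lt.1 fun hlt =>
    (hno y hlt).not_ge <| (le_add_of_nonneg_left (hg x y u)).trans <|
      hQ ▸ le_iSup₂ (f := fun y (_ : y ∈ F x u) => g x y u + V y) y hy
  refine h.not_ge ?_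
  calc Pop F G g V' x ≤ ⨆ y ∈ F x u, g x y u + V' y := (min_le_right _ _).trans (iInf_le _ u)
    _ = ⨆ y ∈ F x u, g x y u + V y := iSup_congr fun y => iSup_congr fun hy => by rw [hVeq y hy]
    _ = Pop F G g V x := hQ.symm

theorem le_card_filter_of_iterate_pop_lt [Fintype X] [Finite U] [Nonempty U]
    (hg : ∀ x y u, 0 ≤ g x y u) (k : ℕ) (x : X)
    (hx : (Pop F G g)^[k + 1] G x < (Pop F G g)^[k] G x) :
    k + 1 ≤ #{z | (Pop F G g)^[k + 1] G z ≤ (Pop F G g)^[k + 1] G x} := by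
  induction k generalizing x with
  | zero => exact card_pos.2 ⟨x, mem_filter.2 ⟨mem_univ x, le_rfl⟩⟩
  | succ k ih =>
    set P := Pop F G g
    have hx' : P (P^[k + 1] G) x < P (P^[k] G) x := by
      simpa only [Function.iterate_succ_apply'] using hx
    obtain ⟨y, hy, hyx⟩ :=
      exists_lt_and_le_pop_of_pop_lt (V := P^[k + 1] G) (V' := P^[k] G) hg
        (antitone_iterate_pop F G g k.le_succ) hx'
    rw [← Function.iterate_succ_apply' (Pop F G g)] at hyx
    have hxS : x ∉ ({z | P^[k + 1] G z ≤ P^[k + 1] G y} : Finset X) := fun hxS =>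
      (((mem_filter.1 hxS).2.trans hyx).trans_lt hx).false
    have hsub : ({z | P^[k + 1] G z ≤ P^[k + 1] G y} : Finset X) ⊆
        ({z | P^[k + 2] G z ≤ P^[k + 2] G x} : Finset X) := fun z hz =>
      mem_filter.2 ⟨mem_univ z,
        (antitone_iterate_pop F G g (k + 1).le_succ z).trans ((mem_filter.1 hz).2.trans hyx)⟩
    exact (ih y hy).trans_lt <| card_lt_card <|
      (ssubset_iff_of_subset hsub).2 ⟨x, mem_filter.2 ⟨mem_univ x, le_rfl⟩, hxS⟩

theorem iterate_pop_card_succ [Fintype X] [Finite U] [Nonempty U]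
    (hg : ∀ x y u, 0 ≤ g x y u) :
    (Pop F G g)^[Fintype.card X + 1] G = (Pop F G g)^[Fintype.card X] G := by
  funext x
  refine (antitone_iterate_pop F G g (Nat.le_succ _) x).eq_of_not_lt fun hlt => ?_
  have := le_card_filter_of_iterate_pop_lt hg _ x hlt
  exact (this.trans (card_le_univ _)).not_gt (Nat.lt_succ_self _)

end Pop

theorem stmt19_general {X U : Type*} [Fintype X] [Fintype U] [Nonempty U]
    (F : X → U → Set X)
    (G : X → EReal) (c : ℝ) (hc : 0 < c)
    (g : X → X → U → EReal) (hg : ∀ x y u, (c : EReal) ≤ g x y u) :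
    {n : ℕ | (Pop F G g)^[n + 1] G ≠ (Pop F G g)^[n] G}.Finite ∧
    (Pop F G g)^[Fintype.card X + 1] G = (Pop F G g)^[Fintype.card X] G := by
  have hg₀ : ∀ x y u, 0 ≤ g x y u := fun x y u => (EReal.coe_nonneg.2 hc.le).trans (hg x y u)
  have hstable := iterate_pop_card_succ (F := F) (G := G) hg₀
  exact ⟨Function.finite_setOf_iterate_succ_ne _ _ hstable, hstable⟩

theorem stmt19 {X U : Type*} [Fintype X] [Fintype U] [Nonempty X] [Nonempty U]
    (F : X → U → Set X) (hF : ∀ x u, (F x u).Nonempty)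
    (G : X → EReal) (c : ℝ) (hc : 0 < c)
    (g : X → X → U → EReal) (hg : ∀ x y u, (c : EReal) ≤ g x y u)
    (hGbdd : ∃ M : ℝ, ∀ x, G x < ⊤ → G x ≤ (M : EReal)) :
    {n : ℕ | (Pop F G g)^[n + 1] G ≠ (Pop F G g)^[n] G}.Finite ∧
    (Pop F G g)^[Fintype.card X + 1] G = (Pop F G g)^[Fintype.card X] G :=
  stmt19_general F G c hc g hg
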